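/- arXiv:1605.04955 — 2 statements merged into one kernel-verified Lean document; each statement's English description precedes it below -/
import Mathlib

section
/- Let α be a Borel probability measure on ℝ^d and t > 0. Then for every x ∈ ℝ^d, the diffusion Fréchet function at scale t/2 satisfies V_{α,t/2}(x) = 2/C_d(t) - 2∫_{ℝ^d} G_t(x,y) dα(y); that is, it equals 2(4πt)^{-d/2} minus twice the solution at time t of the heat equation ∂_t u = Δu with initial condition α, evaluated at x. -/
open MeasureTheory

/-- The Gaussian heat kernel `G_t(x,y) = (4πt)^{-d/2} exp(-‖y-x‖²/(4t))` on `ℝ^d`. -/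
noncomputable def heatKernel (d : ℕ) (t : ℝ) (x y : EuclideanSpace ℝ (Fin d)) : ℝ :=
  ((4 * Real.pi * t) ^ ((d : ℝ) / 2))⁻¹ * Real.exp (-‖y - x‖ ^ 2 / (4 * t))

/-- The squared diffusion distance `d_t²(x₁,x₂) = ‖G_t(x₁,·) - G_t(x₂,·)‖²_{L²}`. -/
noncomputable def diffusionDistSq (d : ℕ) (t : ℝ) (x₁ x₂ : EuclideanSpace ℝ (Fin d)) : ℝ :=
  ∫ y : EuclideanSpace ℝ (Fin d), (heatKernel d t x₁ y - heatKernel d t x₂ y) ^ 2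

/-!
Expanding the square, `d_s²(a,b) = ∫ G_s(a,·)² + ∫ G_s(b,·)² - 2 ∫ G_s(a,·) G_s(b,·)`.
By Apollonius's theorem, `z ↦ G_s(a,z) G_s(b,z)` is a Gaussian centred at the midpoint of `a`
and `b`, and integrating it gives the semigroup identity `∫ G_s(a,z) G_s(b,z) dz = G_{2s}(a,b)`.
Hence `d_s²(a,b) = 2 (8πs)^{-d/2} - 2 G_{2s}(a,b)`; take `s = t/2` and integrate in `a`
against `α`.
-/

open Real

section HeatKernel

variable {d : ℕ} {s t : ℝ}

lemma heatKernel_eq_dist (x y : EuclideanSpace ℝ (Fin d)) :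
    heatKernel d t x y = ((4 * π * t) ^ ((d : ℝ) / 2))⁻¹ * exp (-dist y x ^ 2 / (4 * t)) := by
  rw [heatKernel, dist_eq_norm]

lemma heatKernel_comm (x y : EuclideanSpace ℝ (Fin d)) :
    heatKernel d t x y = heatKernel d t y x := by
  rw [heatKernel_eq_dist, heatKernel_eq_dist, dist_comm]

lemma heatKernel_self (x : EuclideanSpace ℝ (Fin d)) :
    heatKernel d t x x = ((4 * π * t) ^ ((d : ℝ) / 2))⁻¹ := by
  simp [heatKernel]

lemma heatKernel_pos (ht : 0 < t) (x y : EuclideanSpace ℝ (Fin d)) : 0 < heatKernel d t x y := by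
  unfold heatKernel; positivity

lemma heatKernel_le_heatKernel_self (ht : 0 ≤ t) (x y : EuclideanSpace ℝ (Fin d)) :
    heatKernel d t x y ≤ heatKernel d t x x := by
  rw [heatKernel_self, heatKernel]
  refine mul_le_of_le_one_right (by positivity) (exp_le_one_iff.mpr ?_)
  rw [neg_div]
  exact neg_nonpos.mpr (by positivity)

lemma continuous_heatKernel (x : EuclideanSpace ℝ (Fin d)) : Continuous (heatKernel d t x) := by
  unfold heatKernel; fun_prop

lemma integrable_heatKernel (ht : 0 < t) (x : EuclideanSpace ℝ (Fin d))
    (μ : Measure (EuclideanSpace ℝ (Fin d))) [IsFiniteMeasure μ] :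
    Integrable (heatKernel d t x) μ :=
  (integrable_const (heatKernel d t x x)).mono' (continuous_heatKernel x).aestronglyMeasurable <|
    .of_forall fun y => by
      rw [norm_of_nonneg (heatKernel_pos ht x y).le]
      exact heatKernel_le_heatKernel_self ht.le x y

lemma heatKernel_mul_heatKernel (a b z : EuclideanSpace ℝ (Fin d)) :
    heatKernel d s a z * heatKernel d s b z =
      ((4 * π * s) ^ ((d : ℝ) / 2))⁻¹ ^ 2 * exp (-dist a b ^ 2 / (8 * s)) *
        exp (-(1 / (2 * s)) * ‖z - midpoint ℝ a b‖ ^ 2) := by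
  have apollonius :=
    EuclideanGeometry.dist_sq_add_dist_sq_eq_two_mul_dist_midpoint_sq_add_half_dist_sq z a b
  rw [heatKernel_eq_dist, heatKernel_eq_dist, ← dist_eq_norm, mul_mul_mul_comm, ← sq, ← exp_add,
    mul_assoc (_ ^ 2), ← exp_add]
  congr 2
  linear_combination (-1 / (4 * s)) * apollonius

lemma integral_heatKernel_mul_heatKernel (hs : 0 < s) (a b : EuclideanSpace ℝ (Fin d)) :
    ∫ z, heatKernel d s a z * heatKernel d s b z = heatKernel d (2 * s) a b := by
  have gaussian : ∫ z : EuclideanSpace ℝ (Fin d), exp (-(1 / (2 * s)) * ‖z - midpoint ℝ a b‖ ^ 2)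
      = (2 * π * s) ^ ((d : ℝ) / 2) := by
    rw [integral_sub_right_eq_self (fun z => exp (-(1 / (2 * s)) * ‖z‖ ^ 2)),
      GaussianFourier.integral_rexp_neg_mul_sq_norm (by positivity), finrank_euclideanSpace_fin]
    congr 1
    field_simp
  have normalization : ((4 * π * s) ^ ((d : ℝ) / 2))⁻¹ ^ 2 * (2 * π * s) ^ ((d : ℝ) / 2)
      = ((4 * π * (2 * s)) ^ ((d : ℝ) / 2))⁻¹ := by
    rw [sq, ← mul_inv, ← mul_rpow (by positivity) (by positivity),
      ← inv_rpow (by positivity), ← mul_rpow (by positivity) (by positivity),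
      ← inv_rpow (by positivity)]
    congr 1
    field_simp
    ring
  simp_rw [heatKernel_mul_heatKernel]
  rw [integral_const_mul, gaussian, mul_right_comm, normalization, heatKernel_eq_dist, dist_comm]
  ring_nf

lemma integrable_heatKernel_mul_heatKernel (hs : 0 < s) (a b : EuclideanSpace ℝ (Fin d)) :
    Integrable fun z => heatKernel d s a z * heatKernel d s b z :=
  Integrable.of_integral_ne_zero <| by
    rw [integral_heatKernel_mul_heatKernel hs]; exact (heatKernel_pos (by positivity) a b).ne'

lemma diffusionDistSq_eq (hs : 0 < s) (x₁ x₂ : EuclideanSpace ℝ (Fin d)) :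
    diffusionDistSq d s x₁ x₂ =
      2 * ((4 * π * (2 * s)) ^ ((d : ℝ) / 2))⁻¹ - 2 * heatKernel d (2 * s) x₁ x₂ := by
  have expand : ∀ z, (heatKernel d s x₁ z - heatKernel d s x₂ z) ^ 2 =
      heatKernel d s x₁ z * heatKernel d s x₁ z + heatKernel d s x₂ z * heatKernel d s x₂ z
        - 2 * (heatKernel d s x₁ z * heatKernel d s x₂ z) := fun z => by ring
  have h₁₁ := integrable_heatKernel_mul_heatKernel hs x₁ x₁
  have h₂₂ := integrable_heatKernel_mul_heatKernel hs x₂ x₂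
  have h₁₂ := integrable_heatKernel_mul_heatKernel hs x₁ x₂
  have h_diag : Integrable fun z =>
      heatKernel d s x₁ z * heatKernel d s x₁ z + heatKernel d s x₂ z * heatKernel d s x₂ z :=
    h₁₁.add h₂₂
  rw [diffusionDistSq]
  simp_rw [expand]
  rw [integral_sub h_diag (h₁₂.const_mul 2), integral_add h₁₁ h₂₂, integral_const_mul]
  simp only [integral_heatKernel_mul_heatKernel hs, heatKernel_self]
  ring

end HeatKernel

/-- For a Borel probability measure `α` on `ℝ^d`, the diffusion Fréchet function at scale `t/2`
satisfies `V_{α,t/2}(x) = 2/C_d(t) - 2 ∫ G_t(x,y) dα(y)`, i.e. it equals `2(4πt)^{-d/2}`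
minus twice the solution of the heat equation with initial condition `α`, evaluated at `x`. -/
theorem frechet_function_eq (d : ℕ) (t : ℝ) (ht : 0 < t)
    (α : Measure (EuclideanSpace ℝ (Fin d))) [IsProbabilityMeasure α]
    (x : EuclideanSpace ℝ (Fin d)) :
    ∫ y, diffusionDistSq d (t / 2) y x ∂α =
      2 * ((4 * Real.pi * t) ^ ((d : ℝ) / 2))⁻¹ - 2 * ∫ y, heatKernel d t x y ∂α := by
  have pointwise : ∀ y, diffusionDistSq d (t / 2) y x =
      2 * ((4 * π * t) ^ ((d : ℝ) / 2))⁻¹ - 2 * heatKernel d t x y := fun y => by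
    rw [diffusionDistSq_eq (half_pos ht), mul_div_cancel₀ t two_ne_zero, heatKernel_comm]
  simp_rw [pointwise]
  rw [integral_sub (integrable_const _) ((integrable_heatKernel ht x α).const_mul 2),
    integral_const, integral_const_mul, probReal_univ, one_smul]
end

section
/- (Lipschitz-type bound for squared network diffusion distances) Let Δ be a real symmetric n×n matrix with an orthonormal eigenbasis φ₁,…,φₙ of ℝⁿ, Δφ_k = λ_k φ_k, where λ₁ = 0, λ_k ≥ 0 for all k, and the eigenvector φ₁ is a constant vector. Define d_t(i,j) = ‖e^{-tΔ}e_i - e^{-tΔ}e_j‖. Then for every t > 0 and all indices i, j, ℓ: |d_t²(i,ℓ) - d_t²(j,ℓ)| ≤ 4 √(Tr(e^{-2tΔ}) - 1) · d_t(i,j), where Tr denotes the matrix trace. -/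
open NormedSpace

/-- The matrix heat kernel `e^{-tΔ}` applied to the `i`-th standard basis vector. -/
noncomputable def heatVec {n : ℕ} (Δ : Matrix (Fin n) (Fin n) ℝ) (t : ℝ) (i : Fin n) :
    Fin n → ℝ :=
  (exp (-(t • Δ))).mulVec (Pi.single i 1)

/-- The squared network diffusion distance `d_t²(i,j) = ‖e^{-tΔ}e_i - e^{-tΔ}e_j‖²`
(Euclidean norm on `ℝⁿ`). -/
noncomputable def netDiffSq {n : ℕ} (Δ : Matrix (Fin n) (Fin n) ℝ) (t : ℝ) (i j : Fin n) : ℝ :=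
  ∑ m, (heatVec Δ t i m - heatVec Δ t j m) ^ 2

/-!
With `x_a = e^{-tΔ} e_a ∈ ℝⁿ` we have `d_t(a, b) = dist x_a x_b`, and the reverse triangle
inequality gives `|d_t²(i,ℓ) - d_t²(j,ℓ)| ≤ d_t(i,j) (d_t(i,ℓ) + d_t(j,ℓ))`; so it suffices that
every `d_t(a, b) ≤ 2 √(Tr e^{-2tΔ} - 1)`. In the eigenbasis,
`d_t²(a, b) = ∑_k e^{-2tλ_k} (φ_k(a) - φ_k(b))²`. The term of the constant `φ₁` vanishes, the
others are at most `4 e^{-2tλ_k}` because the columns of the orthogonal matrix `(φ_k(a))` are unit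
vectors too, and `∑_{k ≥ 2} e^{-2tλ_k} = Tr e^{-2tΔ} - 1` because `λ₁ = 0`.
-/

open Matrix Finset

lemma abs_dist_sq_sub_dist_sq_le {α : Type*} [PseudoMetricSpace α] (x y z : α) :
    |dist x z ^ 2 - dist y z ^ 2| ≤ dist x y * (dist x z + dist y z) := by
  rw [sq_sub_sq, abs_mul, abs_of_nonneg (by positivity : 0 ≤ dist x z + dist y z), mul_comm]
  exact mul_le_mul_of_nonneg_right (abs_dist_sub_le x y z) (by positivity)

section Orthogonal

variable {ι : Type*} [Fintype ι] [DecidableEq ι] {U Δ : Matrix ι ι ℝ} {lam : ι → ℝ}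

lemma mul_transpose_eq_transpose_mul_diagonal (heig : ∀ k, Δ *ᵥ U k = lam k • U k) :
    Δ * Uᵀ = Uᵀ * diagonal lam := by
  ext a k
  rw [mul_diagonal, mul_comm]
  exact congrFun (heig k) a

lemma exp_smul_eq_of_eigenbasis (hU : U * Uᵀ = 1) (heig : ∀ k, Δ *ᵥ U k = lam k • U k)
    (s : ℝ) : exp (s • Δ) = Uᵀ * diagonal (fun k => Real.exp (s * lam k)) * U := by
  have hinv : U⁻¹ = Uᵀ := inv_eq_right_inv hU
  have hunit : IsUnit U := IsUnit.of_mul_eq_one _ hU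
  have hΔ : Δ = Uᵀ * diagonal lam * U := by
    rw [← mul_transpose_eq_transpose_mul_diagonal heig, Matrix.mul_assoc,
      mul_eq_one_comm.mp hU, Matrix.mul_one]
  have hsΔ : s • Δ = U⁻¹ * diagonal (fun k => s * lam k) * U := by
    rw [hinv, hΔ, ← Matrix.smul_mul, ← Matrix.mul_smul, ← diagonal_smul]
    rfl
  rw [hsΔ, exp_conj' U _ hunit, exp_diagonal, hinv, Pi.exp_def, ← Real.exp_eq_exp_ℝ]

lemma trace_exp_smul_of_eigenbasis (hU : U * Uᵀ = 1) (heig : ∀ k, Δ *ᵥ U k = lam k • U k)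
    (s : ℝ) : trace (exp (s • Δ)) = ∑ k, Real.exp (s * lam k) := by
  rw [exp_smul_eq_of_eigenbasis hU heig, trace_mul_cycle, hU, Matrix.one_mul, trace_diagonal]

lemma sum_sq_transpose_mulVec (hU : U * Uᵀ = 1) (c : ι → ℝ) :
    ∑ m, (Uᵀ *ᵥ c) m ^ 2 = ∑ k, c k ^ 2 := by
  have h : (Uᵀ *ᵥ c) ⬝ᵥ (Uᵀ *ᵥ c) = c ⬝ᵥ c := by
    rw [dotProduct_mulVec, vecMul_transpose, mulVec_mulVec, hU, one_mulVec]
  simpa only [dotProduct, sq] using h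

lemma sq_le_one_of_mul_transpose_eq_one (hU : U * Uᵀ = 1) (k a : ι) : U k a ^ 2 ≤ 1 := by
  have hcol : ∑ k', U k' a ^ 2 = 1 := by
    have h : (Uᵀ * U) a a = 1 := by rw [mul_eq_one_comm.mp hU, one_apply_eq]
    simpa [mul_apply, sq] using h
  rw [← hcol]
  exact single_le_sum (f := fun k' => U k' a ^ 2) (fun _ _ => sq_nonneg _) (mem_univ k)

end Orthogonal

section Heat

variable {n : ℕ} {U Δ : Matrix (Fin n) (Fin n) ℝ} {lam : Fin n → ℝ}

noncomputable def heatPoint (Δ : Matrix (Fin n) (Fin n) ℝ) (t : ℝ) (a : Fin n) :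
    EuclideanSpace ℝ (Fin n) :=
  WithLp.toLp 2 (heatVec Δ t a)

lemma netDiffSq_eq_dist_sq (Δ : Matrix (Fin n) (Fin n) ℝ) (t : ℝ) (a b : Fin n) :
    netDiffSq Δ t a b = dist (heatPoint Δ t a) (heatPoint Δ t b) ^ 2 := by
  rw [EuclideanSpace.dist_eq, Real.sq_sqrt (by positivity), netDiffSq]
  simp [heatPoint, Real.dist_eq, sq_abs]

lemma netDiffSq_eq_sum_of_eigenbasis (hU : U * Uᵀ = 1) (heig : ∀ k, Δ *ᵥ U k = lam k • U k)
    (t : ℝ) (a b : Fin n) :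
    netDiffSq Δ t a b = ∑ k, (Real.exp (-t * lam k) * (U k a - U k b)) ^ 2 := by
  have hdiff : heatVec Δ t a - heatVec Δ t b =
      Uᵀ *ᵥ fun k => Real.exp (-t * lam k) * (U k a - U k b) := by
    rw [heatVec, heatVec, ← mulVec_sub, ← neg_smul, exp_smul_eq_of_eigenbasis hU heig,
      ← mulVec_mulVec, ← mulVec_mulVec, mulVec_sub, mulVec_single_one, mulVec_single_one]
    congr 1
    ext k
    rw [mulVec_diagonal]
    rfl
  rw [← sum_sq_transpose_mulVec hU, ← hdiff, netDiffSq]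
  rfl

lemma netDiffSq_le_of_eigenbasis [NeZero n] (hU : U * Uᵀ = 1)
    (heig : ∀ k, Δ *ᵥ U k = lam k • U k) (h0 : lam 0 = 0) (hconst : ∃ c : ℝ, ∀ a, U 0 a = c)
    (t : ℝ) (a b : Fin n) :
    netDiffSq Δ t a b ≤ 4 * ((exp (-((2 * t) • Δ))).trace - 1) := by
  obtain ⟨c, hc⟩ := hconst
  rw [netDiffSq_eq_sum_of_eigenbasis hU heig, ← neg_smul, trace_exp_smul_of_eigenbasis hU heig,
    ← add_sum_erase _ _ (mem_univ 0), ← add_sum_erase _ _ (mem_univ 0), h0, hc a, hc b]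
  simp only [sub_self, mul_zero, zero_pow two_ne_zero, Real.exp_zero, zero_add,
    add_sub_cancel_left, mul_sum]
  refine sum_le_sum fun k _ => ?_
  have hdiff : (U k a - U k b) ^ 2 ≤ 4 := by
    nlinarith [sq_le_one_of_mul_transpose_eq_one hU k a, sq_le_one_of_mul_transpose_eq_one hU k b,
      sq_nonneg (U k a + U k b)]
  calc (Real.exp (-t * lam k) * (U k a - U k b)) ^ 2
      = Real.exp (-(2 * t) * lam k) * (U k a - U k b) ^ 2 := by
        rw [mul_pow, ← Real.exp_nat_mul]
        ring_nf
    _ ≤ Real.exp (-(2 * t) * lam k) * 4 := by gcongr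
    _ = 4 * Real.exp (-(2 * t) * lam k) := mul_comm _ _

lemma dist_heatPoint_le [NeZero n] (hU : U * Uᵀ = 1) (heig : ∀ k, Δ *ᵥ U k = lam k • U k)
    (h0 : lam 0 = 0) (hconst : ∃ c : ℝ, ∀ a, U 0 a = c) (t : ℝ) (a b : Fin n) :
    dist (heatPoint Δ t a) (heatPoint Δ t b) ≤
      2 * √((exp (-((2 * t) • Δ))).trace - 1) := by
  rw [← Real.sqrt_sq dist_nonneg, ← netDiffSq_eq_dist_sq, ← Real.sqrt_sq zero_le_two,
    ← Real.sqrt_mul (sq_nonneg 2)]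
  exact Real.sqrt_le_sqrt ((netDiffSq_le_of_eigenbasis hU heig h0 hconst t a b).trans_eq
    (by norm_num))

end Heat

theorem netDiffSq_lipschitz_general (n : ℕ) [NeZero n]
    (Δ : Matrix (Fin n) (Fin n) ℝ)
    (φ : Fin n → Fin n → ℝ) (lam : Fin n → ℝ)
    (horth : ∀ k l, ∑ i, φ k i * φ l i = if k = l then (1 : ℝ) else 0)
    (heig : ∀ k, Δ.mulVec (φ k) = lam k • φ k)
    (h0 : lam 0 = 0)
    (hconst : ∃ c : ℝ, ∀ i, φ 0 i = c)
    (t : ℝ) (i j l : Fin n) :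
    |netDiffSq Δ t i l - netDiffSq Δ t j l| ≤
      4 * Real.sqrt ((exp (-((2 * t) • Δ))).trace - 1) * Real.sqrt (netDiffSq Δ t i j) := by
  have hU : of φ * (of φ)ᵀ = 1 := by
    ext k k'
    simpa [mul_apply, one_apply] using horth k k'
  set r := 2 * Real.sqrt ((exp (-((2 * t) • Δ))).trace - 1)
  have hr : ∀ a b, dist (heatPoint Δ t a) (heatPoint Δ t b) ≤ r :=
    dist_heatPoint_le (U := of φ) hU heig h0 hconst t
  rw [netDiffSq_eq_dist_sq, netDiffSq_eq_dist_sq, netDiffSq_eq_dist_sq,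
    Real.sqrt_sq dist_nonneg]
  calc _ ≤ dist (heatPoint Δ t i) (heatPoint Δ t j) *
        (dist (heatPoint Δ t i) (heatPoint Δ t l) + dist (heatPoint Δ t j) (heatPoint Δ t l)) :=
        abs_dist_sq_sub_dist_sq_le _ _ _
    _ ≤ dist (heatPoint Δ t i) (heatPoint Δ t j) * (r + r) := by gcongr <;> apply hr
    _ = _ := by ring

/-- Lipschitz-type bound for squared network diffusion distances: for `Δ` real symmetric with
orthonormal eigenbasis `φ₁,…,φₙ`, `λ₁ = 0`, `λ_k ≥ 0`, and `φ₁` constant,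
`|d_t²(i,ℓ) - d_t²(j,ℓ)| ≤ 4 √(Tr(e^{-2tΔ}) - 1) d_t(i,j)`. -/
theorem netDiffSq_lipschitz (n : ℕ) [NeZero n]
    (Δ : Matrix (Fin n) (Fin n) ℝ) (hΔ : Δ.IsSymm)
    (φ : Fin n → Fin n → ℝ) (lam : Fin n → ℝ)
    (horth : ∀ k l, ∑ i, φ k i * φ l i = if k = l then (1 : ℝ) else 0)
    (heig : ∀ k, Δ.mulVec (φ k) = lam k • φ k)
    (h0 : lam 0 = 0) (hnonneg : ∀ k, 0 ≤ lam k)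
    (hconst : ∃ c : ℝ, ∀ i, φ 0 i = c)
    (t : ℝ) (ht : 0 < t) (i j l : Fin n) :
    |netDiffSq Δ t i l - netDiffSq Δ t j l| ≤
      4 * Real.sqrt ((exp (-((2 * t) • Δ))).trace - 1) * Real.sqrt (netDiffSq Δ t i j) :=
  netDiffSq_lipschitz_general n Δ φ lam horth heig h0 hconst t i j l
end
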